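/- arXiv:2512.05915 — 2 statements merged into one kernel-verified Lean document; each statement's English description precedes it below -/
import Mathlib

section
/- Let W_A be a real n×n matrix, α > 0, L > 0, and set A = L · W_A (α I + W_Aᵀ W_A)^(−1/2). Then L² I − Aᵀ A = L² α (α I + W_Aᵀ W_A)^(−1). In particular L² I − Aᵀ A is symmetric positive definite. -/
open Matrix

namespace Matrix.PosSemidef

open scoped ComplexOrder

noncomputable def sqrt {n 𝕜 : Type*} [Fintype n] [RCLike 𝕜] [DecidableEq n] {A : Matrix n n 𝕜}
    (hA : PosSemidef A) : Matrix n n 𝕜 :=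
  hA.1.eigenvectorUnitary.1 * diagonal ((↑) ∘ (√·) ∘ hA.1.eigenvalues) *
    (star hA.1.eigenvectorUnitary : Matrix n n 𝕜)

lemma sqrt_mul_self' {n 𝕜 : Type*} [Fintype n] [RCLike 𝕜] [DecidableEq n] {A : Matrix n n 𝕜}
    (hA : PosSemidef A) : hA.sqrt * hA.sqrt = A := by
  conv_rhs => rw [hA.1.spectral_theorem, Unitary.conjStarAlgAut_apply]
  unfold sqrt
  have hu : (star hA.1.eigenvectorUnitary : Matrix n n 𝕜) * hA.1.eigenvectorUnitary.1 = 1 :=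
    Unitary.coe_star_mul_self _
  calc _ = hA.1.eigenvectorUnitary.1 * (diagonal ((↑) ∘ (√·) ∘ hA.1.eigenvalues) *
        ((star hA.1.eigenvectorUnitary : Matrix n n 𝕜) * hA.1.eigenvectorUnitary.1) *
        diagonal ((↑) ∘ (√·) ∘ hA.1.eigenvalues)) *
        (star hA.1.eigenvectorUnitary : Matrix n n 𝕜) := by simp only [Matrix.mul_assoc]
    _ = _ := by
      rw [hu, Matrix.mul_one, diagonal_mul_diagonal]
      congr 3
      funext i
      simp only [Function.comp_apply]
      rw [← RCLike.ofReal_mul, Real.mul_self_sqrt (hA.eigenvalues_nonneg i)]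

lemma sqrt_isHermitian' {n 𝕜 : Type*} [Fintype n] [RCLike 𝕜] [DecidableEq n] {A : Matrix n n 𝕜}
    (hA : PosSemidef A) : hA.sqrt.IsHermitian := by
  unfold sqrt IsHermitian
  rw [conjTranspose_mul, conjTranspose_mul, diagonal_conjTranspose, star_eq_conjTranspose,
    conjTranspose_conjTranspose, Matrix.mul_assoc]
  congr 3
  funext i
  simp

end Matrix.PosSemidef

lemma smul_posDef {n : ℕ} {c : ℝ} (hc : 0 < c) {M : Matrix (Fin n) (Fin n) ℝ}
    (hM : M.PosDef) : (c • M).PosDef := by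
  refine ⟨?_, fun x hx => ?_⟩
  · show (c • M)ᴴ = c • M
    rw [Matrix.conjTranspose_smul, hM.1.eq]
    simp
  exact (hM.smul hc).2 hx

theorem stmt5 {n : ℕ} (W : Matrix (Fin n) (Fin n) ℝ) (α L : ℝ) (hα : 0 < α) (hL : 0 < L)
    (hP : (α • (1 : Matrix (Fin n) (Fin n) ℝ) + Wᵀ * W).PosDef)
    (A : Matrix (Fin n) (Fin n) ℝ)
    (hA : A = L • (W * (hP.posSemidef.sqrt)⁻¹)) :
    (L ^ 2) • (1 : Matrix (Fin n) (Fin n) ℝ) - Aᵀ * A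
        = (L ^ 2 * α) • (α • (1 : Matrix (Fin n) (Fin n) ℝ) + Wᵀ * W)⁻¹ ∧
      ((L ^ 2) • (1 : Matrix (Fin n) (Fin n) ℝ) - Aᵀ * A).PosDef := by
  set S : Matrix (Fin n) (Fin n) ℝ := α • (1 : Matrix (Fin n) (Fin n) ℝ) + Wᵀ * W with hS
  set B : Matrix (Fin n) (Fin n) ℝ := hP.posSemidef.sqrt with hB
  have hBB : B * B = S := hP.posSemidef.sqrt_mul_self'
  have hBH : Bᵀ = B := by
    have := hP.posSemidef.sqrt_isHermitian'
    rw [Matrix.IsHermitian, conjTranspose_eq_transpose_of_trivial] at this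
    exact this
  have hdet : IsUnit B.det := by
    have : B.det * B.det = S.det := by rw [← Matrix.det_mul, hBB]
    have hSdet := hP.det_pos
    have : B.det ≠ 0 := by
      intro h
      rw [h, mul_zero] at this
      exact absurd this.symm (ne_of_gt hSdet)
    exact isUnit_iff_ne_zero.mpr this
  have hBinv : B * B⁻¹ = 1 := Matrix.mul_nonsing_inv B hdet
  have hBinv' : B⁻¹ * B = 1 := Matrix.nonsing_inv_mul B hdet
  have hBinvT : (B⁻¹)ᵀ = B⁻¹ := by rw [Matrix.transpose_nonsing_inv, hBH]
  have hSinv : B⁻¹ * B⁻¹ = S⁻¹ := by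
    rw [← hBB, Matrix.mul_inv_rev]
  have hWTW : Wᵀ * W = S - α • (1 : Matrix (Fin n) (Fin n) ℝ) := by
    rw [hS]; abel
  have key : Aᵀ * A = (L ^ 2) • (1 : Matrix (Fin n) (Fin n) ℝ) - (L ^ 2 * α) • S⁻¹ := by
    rw [hA]
    rw [Matrix.transpose_smul, Matrix.transpose_mul, hBinvT]
    rw [Matrix.smul_mul, Matrix.mul_smul, smul_smul]
    have : B⁻¹ * Wᵀ * (W * B⁻¹) = B⁻¹ * (Wᵀ * W) * B⁻¹ := by
      simp [Matrix.mul_assoc]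
    rw [this, hWTW]
    rw [Matrix.mul_sub, Matrix.sub_mul]
    have h1 : B⁻¹ * S * B⁻¹ = 1 := by
      rw [← hBB, show B⁻¹ * (B * B) * B⁻¹ = (B⁻¹ * B) * (B * B⁻¹) by noncomm_ring,
        hBinv', hBinv, Matrix.one_mul]
    have h2 : B⁻¹ * (α • (1 : Matrix (Fin n) (Fin n) ℝ)) * B⁻¹ = α • S⁻¹ := by
      rw [Matrix.mul_smul, Matrix.mul_one, Matrix.smul_mul, hSinv]
    rw [h1, h2, smul_sub, smul_smul, pow_two]
  refine ⟨?_, ?_⟩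
  · rw [key]; abel
  · rw [key]
    have : (L ^ 2) • (1 : Matrix (Fin n) (Fin n) ℝ) -
        ((L ^ 2) • (1 : Matrix (Fin n) (Fin n) ℝ) - (L ^ 2 * α) • S⁻¹)
        = (L ^ 2 * α) • S⁻¹ := by abel
    rw [this]
    exact smul_posDef (by positivity) hP.inv
end

section
/- Let σ: ℝ → ℝ be a function that is slope-restricted in [m, L] with 0 ≤ m ≤ L, i.e., m(a−b)² ≤ (σ(a)−σ(b))(a−b) ≤ L(a−b)² for all a, b ∈ ℝ. Let Λ be a diagonal n×n matrix with nonnegative diagonal entries, and let σ act componentwise on ℝⁿ. Then for all v, v′ ∈ ℝⁿ, setting Δv = v − v′ and Δw = σ(v) − σ(v′): [Δv; Δw]ᵀ [[−2 L m Λ, (m+L) Λ], [(m+L) Λ, −2 Λ]] [Δv; Δw] ≥ 0. -/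
open Matrix

lemma coord_ineq (σ : ℝ → ℝ) (m L : ℝ) (hm : 0 ≤ m) (hmL : m ≤ L)
    (hσ : ∀ a b : ℝ, m * (a - b) ^ 2 ≤ (σ a - σ b) * (a - b) ∧
      (σ a - σ b) * (a - b) ≤ L * (a - b) ^ 2) (a b : ℝ) :
    0 ≤ (a - b) * (-(2 * L * m * (a - b)) + (m + L) * (σ a - σ b)) +
      (σ a - σ b) * ((m + L) * (a - b) + -(2 * (σ a - σ b))) := by
  obtain ⟨h1, h2⟩ := hσ a b
  rcases eq_or_ne a b with h | h
  · simp [h]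
  · have h' : a - b ≠ 0 := sub_ne_zero.2 h
    have hd : (0:ℝ) < (a - b) ^ 2 := by positivity
    nlinarith [mul_nonneg (sub_nonneg.2 h1) (sub_nonneg.2 h2)]

theorem stmt16 {n : ℕ} (σ : ℝ → ℝ) (m L : ℝ) (hm : 0 ≤ m) (hmL : m ≤ L)
    (hσ : ∀ a b : ℝ, m * (a - b) ^ 2 ≤ (σ a - σ b) * (a - b) ∧
      (σ a - σ b) * (a - b) ≤ L * (a - b) ^ 2)
    (Λ : Matrix (Fin n) (Fin n) ℝ) (hΛdiag : Λ.IsDiag) (hΛ : ∀ i, 0 ≤ Λ i i)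
    (v v' : Fin n → ℝ) :
    0 ≤ (Sum.elim (v - v') (fun i => σ (v i) - σ (v' i))) ⬝ᵥ
        (Matrix.fromBlocks ((-(2 * L * m)) • Λ) ((m + L) • Λ)
          ((m + L) • Λ) ((-2 : ℝ) • Λ)).mulVec
          (Sum.elim (v - v') (fun i => σ (v i) - σ (v' i))) := by
  rw [← hΛdiag.diagonal_diag]
  simp only [dotProduct, mulVec, Fintype.sum_sum_type, fromBlocks, diagonal, Finset.mul_sum,
    Finset.sum_ite_eq', Finset.sum_ite_eq, ite_mul, zero_mul, Pi.sub_apply, Sum.elim_inl, Sum.elim_inr, Matrix.of_apply,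
    Matrix.smul_apply, Matrix.diag_apply, smul_eq_mul, mul_ite, mul_zero, Finset.mem_univ,
    if_true]
  rw [← Finset.sum_add_distrib]
  apply Finset.sum_nonneg
  intro i _
  have := coord_ineq σ m L hm hmL hσ (v i) (v' i)
  nlinarith [hΛ i, this]
end
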